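/- Let K be a nonempty compact metric space, let m ≥ 1, and for each j = 1, …, m let h_j : K → K be continuous. Then R := R_{K,f}(h_1, …, h_m) is nonempty and compact; moreover R = ⋃_{x ∈ {1,…,m}^ℕ} ⋂_{k=1}^∞ h_{x_1}(h_{x_2}(⋯ h_{x_k}(K) ⋯)), and R = ⋃_{j=1}^m h_j(R), so that (R, (h_1, …, h_m)) is a forward self-similar system. -/

import Mathlib

open Set

/-- `h_{w̄}(L)` for a finite word `w = (w₁, …, w_k)`, encoded as the list `[w₁, …, w_k]`,
namely `h_{w₁}(h_{w₂}(⋯ h_{w_k}(L) ⋯))`, where `L` is the whole space. -/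
def fwdIm {L : Type*} {m : ℕ} (h : Fin m → L → L) : List (Fin m) → Set L
  | [] => Set.univ
  | a :: w => h a '' fwdIm h w

/-- The truncation `x|k` of an infinite word `x`. -/
def wordTrunc {m : ℕ} (x : ℕ → Fin m) (k : ℕ) : List (Fin m) :=
  List.ofFn fun i : Fin k => x i.val

/-- `L_x = ⋂_{j ≥ 1} h_{x₁}(h_{x₂}(⋯ h_{x_j}(L) ⋯))`. -/
def fwdLimSet {L : Type*} {m : ℕ} (h : Fin m → L → L) (x : ℕ → Fin m) : Set L :=
  ⋂ j : ℕ, fwdIm h (wordTrunc x (j + 1))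

/-- `R_{K,f}(h₁, …, h_m) = ⋂_{n ≥ 1} ⋃_{|w| = n} h_{w₁}(h_{w₂}(⋯ h_{w_n}(K) ⋯))`,
where `K` is the whole space. -/
def RKf {K : Type*} {m : ℕ} (h : Fin m → K → K) : Set K :=
  ⋂ n : ℕ, ⋃ w : Fin (n + 1) → Fin m, fwdIm h (List.ofFn w)

lemma fwdIm_nonempty {L : Type*} [Nonempty L] {m : ℕ} (h : Fin m → L → L)
    (w : List (Fin m)) : (fwdIm h w).Nonempty := by
  induction w with
  | nil => exact univ_nonempty
  | cons a w ih => exact ih.image _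

lemma fwdIm_compact {L : Type*} [TopologicalSpace L] [CompactSpace L] {m : ℕ}
    {h : Fin m → L → L} (hc : ∀ j, Continuous (h j)) (w : List (Fin m)) :
    IsCompact (fwdIm h w) := by
  induction w with
  | nil => exact isCompact_univ
  | cons a w ih => exact ih.image (hc a)

lemma fwdIm_append_subset {L : Type*} {m : ℕ} (h : Fin m → L → L)
    (u v : List (Fin m)) : fwdIm h (u ++ v) ⊆ fwdIm h u := by
  induction u with
  | nil => exact subset_univ _
  | cons a u ih => exact image_mono ih

lemma wordTrunc_succ {m : ℕ} (x : ℕ → Fin m) (k : ℕ) :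
    wordTrunc x (k + 1) = wordTrunc x k ++ [x k] := by
  unfold wordTrunc
  rw [List.ofFn_succ']
  simp [List.concat_eq_append]

lemma wordTrunc_eq_ofFn {m k : ℕ} {x : ℕ → Fin m} {w : Fin k → Fin m}
    (hw : ∀ i : Fin k, x i.val = w i) : wordTrunc x k = List.ofFn w := by
  unfold wordTrunc
  exact congrArg List.ofFn (funext hw)

lemma wordTrunc_cons {m : ℕ} (x : ℕ → Fin m) (k : ℕ) :
    wordTrunc x (k + 1) = x 0 :: wordTrunc (fun n => x (n + 1)) k := by
  unfold wordTrunc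
  rw [List.ofFn_succ]
  simp [Fin.val_succ]

/-- `R := R_{K,f}(h₁, …, h_m)` is nonempty and compact, equals
`⋃_{x ∈ {1,…,m}^ℕ} ⋂_{k ≥ 1} h_{x₁}(⋯ h_{x_k}(K) ⋯)`, and satisfies
`R = ⋃_{j=1}^m h_j(R)`, so `(R, (h₁, …, h_m))` is a forward self-similar system. -/
theorem RKf_forward_self_similar
    {K : Type*} [MetricSpace K] [CompactSpace K] [Nonempty K]
    {m : ℕ} (hm : 1 ≤ m)
    (h : Fin m → K → K) (hcont : ∀ j, Continuous (h j)) :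
    (RKf h).Nonempty ∧ IsCompact (RKf h) ∧
    (RKf h = ⋃ x : ℕ → Fin m, ⋂ k : ℕ, fwdIm h (wordTrunc x (k + 1))) ∧
    (RKf h = ⋃ j, h j '' RKf h) := by
  haveI : Nonempty (Fin m) := ⟨⟨0, hm⟩⟩
  set A : ℕ → Set K := fun n => ⋃ w : Fin (n + 1) → Fin m, fwdIm h (List.ofFn w) with hA
  have hRA : RKf h = ⋂ n, A n := rfl
  have hAcompact : ∀ n, IsCompact (A n) :=
    fun n => isCompact_iUnion fun w => fwdIm_compact hcont _
  have hAclosed : ∀ n, IsClosed (A n) := fun n => (hAcompact n).isClosed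
  have hAne : ∀ n, (A n).Nonempty := by
    intro n
    obtain ⟨y, hy⟩ := fwdIm_nonempty h (List.ofFn fun _ : Fin (n + 1) => (⟨0, hm⟩ : Fin m))
    exact ⟨y, mem_iUnion.2 ⟨fun _ => ⟨0, hm⟩, hy⟩⟩
  have hAmono : ∀ n, A (n + 1) ⊆ A n := by
    intro n z hz
    obtain ⟨w, hw⟩ := mem_iUnion.1 hz
    refine mem_iUnion.2 ⟨fun i => w i.castSucc, ?_⟩
    refine fwdIm_append_subset h _ [w (Fin.last _)] ?_
    rwa [← List.concat_eq_append, ← List.ofFn_succ']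
  -- Nonempty
  have hne : (RKf h).Nonempty := by
    rw [hRA]
    exact IsCompact.nonempty_iInter_of_sequence_nonempty_isCompact_isClosed
      A hAmono hAne (hAcompact 0) hAclosed
  -- Compact
  have hcomp : IsCompact (RKf h) := by
    rw [hRA]
    exact (isClosed_iInter hAclosed).isCompact
  -- Third equality
  have heq3 : RKf h = ⋃ x : ℕ → Fin m, ⋂ k : ℕ, fwdIm h (wordTrunc x (k + 1)) := by
    apply Subset.antisymm
    · intro z hz
      set S : ℕ → Set (ℕ → Fin m) :=
        fun k => {x | z ∈ fwdIm h (wordTrunc x (k + 1))} with hS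
      have hSrep : ∀ k, S k =
          ⋃ w : {w : Fin (k + 1) → Fin m // z ∈ fwdIm h (List.ofFn w)},
            {x : ℕ → Fin m | ∀ i : Fin (k + 1), x i.val = w.1 i} := by
        intro k
        ext x
        simp only [hS, mem_setOf_eq, mem_iUnion]
        constructor
        · intro hx
          refine ⟨⟨fun i => x i.val, ?_⟩, fun i => rfl⟩
          rwa [← wordTrunc_eq_ofFn (w := fun i : Fin (k + 1) => x i.val) (fun i => rfl)]
        · rintro ⟨⟨w, hw⟩, hxw⟩
          rwa [wordTrunc_eq_ofFn hxw]
      have hSclosed : ∀ k, IsClosed (S k) := by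
        intro k
        rw [hSrep k]
        refine isClosed_iUnion_of_finite fun w => ?_
        have : {x : ℕ → Fin m | ∀ i : Fin (k + 1), x i.val = w.1 i} =
            ⋂ i : Fin (k + 1), {x : ℕ → Fin m | x i.val = w.1 i} := by
          ext x; simp [mem_iInter]
        rw [this]
        exact isClosed_iInter fun i =>
          isClosed_eq (continuous_apply (i : ℕ)) continuous_const
      have hSne : ∀ k, (S k).Nonempty := by
        intro k
        have hzk : z ∈ A k := mem_iInter.1 (hRA ▸ hz) k
        obtain ⟨w, hw⟩ := mem_iUnion.1 hzk
        refine ⟨fun n => if hn : n < k + 1 then w ⟨n, hn⟩ else w 0, ?_⟩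
        have : wordTrunc (fun n => if hn : n < k + 1 then w ⟨n, hn⟩ else w 0) (k + 1)
            = List.ofFn w := by
          refine wordTrunc_eq_ofFn fun i => ?_
          simp [i.isLt]
        show z ∈ fwdIm h (wordTrunc _ (k + 1))
        rw [this]
        exact hw
      have hSmono : ∀ k, S (k + 1) ⊆ S k := by
        intro k x hx
        simp only [hS, mem_setOf_eq] at hx ⊢
        refine fwdIm_append_subset h _ [x (k + 1)] ?_
        rwa [← wordTrunc_succ]
      obtain ⟨x, hx⟩ := IsCompact.nonempty_iInter_of_sequence_nonempty_isCompact_isClosed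
        S hSmono hSne ((hSclosed 0).isCompact) hSclosed
      exact mem_iUnion.2 ⟨x, mem_iInter.2 fun k => mem_iInter.1 hx k⟩
    · intro z hz
      obtain ⟨x, hx⟩ := mem_iUnion.1 hz
      rw [hRA]
      refine mem_iInter.2 fun n => mem_iUnion.2 ⟨fun i => x i.val, ?_⟩
      have := mem_iInter.1 hx n
      rwa [wordTrunc_eq_ofFn (w := fun i : Fin (n + 1) => x i.val) (fun i => rfl)] at this
  -- Fourth equality
  have heq4 : RKf h = ⋃ j, h j '' RKf h := by
    apply Subset.antisymm
    · intro z hz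
      rw [heq3] at hz
      obtain ⟨x, hx⟩ := mem_iUnion.1 hz
      set x' : ℕ → Fin m := fun n => x (n + 1) with hx'
      set F : ℕ → Set K :=
        fun k => h (x 0) ⁻¹' {z} ∩ fwdIm h (wordTrunc x' (k + 1)) with hF
      have hFne : ∀ k, (F k).Nonempty := by
        intro k
        have hzk := mem_iInter.1 hx (k + 1)
        rw [wordTrunc_cons x (k + 1)] at hzk
        obtain ⟨y, hy, hyz⟩ := hzk
        exact ⟨y, by simp [hF, hyz], hy⟩
      have hFcompact : ∀ k, IsCompact (F k) :=
        fun k => (fwdIm_compact hcont _).inter_left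
          (IsClosed.preimage (hcont _) isClosed_singleton)
      have hFclosed : ∀ k, IsClosed (F k) := fun k => (hFcompact k).isClosed
      have hFmono : ∀ k, F (k + 1) ⊆ F k := by
        intro k
        refine inter_subset_inter_right _ ?_
        rw [wordTrunc_succ x' (k + 1)]
        exact fwdIm_append_subset h _ _
      obtain ⟨y, hy⟩ := IsCompact.nonempty_iInter_of_sequence_nonempty_isCompact_isClosed
        F hFmono hFne (hFcompact 0) hFclosed
      have hyz : h (x 0) y = z := by
        have := (mem_iInter.1 hy 0).1
        simpa using this
      have hyR : y ∈ RKf h := by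
        rw [heq3]
        exact mem_iUnion.2 ⟨x', mem_iInter.2 fun k => (mem_iInter.1 hy k).2⟩
      exact mem_iUnion.2 ⟨x 0, y, hyR, hyz⟩
    · intro z hz
      obtain ⟨j, y, hy, rfl⟩ := by simpa [mem_iUnion] using hz
      rw [hRA]
      refine mem_iInter.2 fun n => ?_
      cases n with
      | zero =>
        refine mem_iUnion.2 ⟨fun _ => j, ?_⟩
        simp only [List.ofFn_succ, List.ofFn_zero, fwdIm]
        exact ⟨y, trivial, rfl⟩
      | succ n =>
        have hyn : y ∈ A n := mem_iInter.1 (hRA ▸ hy) n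
        obtain ⟨w, hw⟩ := mem_iUnion.1 hyn
        refine mem_iUnion.2 ⟨Fin.cons j w, ?_⟩
        rw [List.ofFn_succ]
        simp only [Fin.cons_zero, Fin.cons_succ, fwdIm]
        exact ⟨y, hw, rfl⟩
  exact ⟨hne, hcomp, heq3, heq4⟩
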